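/- arXiv:2301.07644 — 2 statements merged into one kernel-verified Lean document; each statement's English description precedes it below -/
import Mathlib

section
/- Let D = diag(0, λ) be a diagonal real 2×2 matrix with λ ≠ 0 and U the flip matrix. Then for every a ∈ M₂(ℂ), ‖[D, UaU*]‖ = ‖[D, a]‖. -/
open Matrix
open scoped Matrix.Norms.L2Operator

/-!
Conjugation by the flip `U` swaps the diagonal entries of `D`, so `D + U D U*` is the scalar
`λ`. Hence `[D, U a U*] = [λ - U D U*, U a U*] = -U [D, a] U*`, and conjugation by a unitary
preserves the C*-norm.
-/

theorem commutator_conj_eq_neg_conj_commutator {R : Type*} [Ring R] {U V D c : R}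
    (hVU : V * U = 1) (hc : ∀ x, Commute c x) (hD : U * D * V = c - D) (a : R) :
    D * (U * a * V) - U * a * V * D = -(U * (D * a - a * D) * V) := by
  have hD' : D = c - U * D * V := by rw [hD, sub_sub_cancel]
  calc D * (U * a * V) - U * a * V * D
      = (c - U * D * V) * (U * a * V) - U * a * V * (c - U * D * V) := by rw [← hD']
    _ = U * a * V * (U * D * V) - U * D * V * (U * a * V) := by
        rw [sub_mul, mul_sub, (hc _).eq]; abel
    _ = U * (a * (V * U) * D) * V - U * (D * (V * U) * a) * V := by noncomm_ring
    _ = -(U * (D * a - a * D) * V) := by rw [hVU]; noncomm_ring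

theorem norm_commutator_unitary_conj {E : Type*} [NormedRing E] [StarRing E] [CStarRing E]
    {U D c : E} (hU : U ∈ unitary E) (hc : ∀ x, Commute c x) (hD : U * D * star U = c - D)
    (a : E) : ‖D * (U * a * star U) - U * a * star U * D‖ = ‖D * a - a * D‖ := by
  rw [commutator_conj_eq_neg_conj_commutator (Unitary.star_mul_self_of_mem hU) hc hD, norm_neg,
    CStarRing.norm_mul_mem_unitary _ (Unitary.star_mem hU), CStarRing.norm_mem_unitary_mul _ hU]

theorem stmt_2_general (l : ℝ)
    (D : Matrix (Fin 2) (Fin 2) ℂ) (hD : D = Matrix.diagonal ![(0 : ℂ), (l : ℂ)])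
    (U : Matrix (Fin 2) (Fin 2) ℂ) (hU : U = !![0, 1; 1, 0]) :
    ∀ a : Matrix (Fin 2) (Fin 2) ℂ,
      ‖D * (U * a * Uᴴ) - (U * a * Uᴴ) * D‖ = ‖D * a - a * D‖ := by
  have hUnitary : U ∈ unitary (Matrix (Fin 2) (Fin 2) ℂ) := by
    rw [← unitaryGroup, mem_unitaryGroup_iff', star_eq_conjTranspose, hU]
    ext i j; fin_cases i <;> fin_cases j <;> simp [mul_apply]
  have hUDU : U * D * star U = scalar (Fin 2) (l : ℂ) - D := by
    rw [star_eq_conjTranspose, hU, hD]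
    ext i j; fin_cases i <;> fin_cases j <;> simp [mul_apply, vecMul, dotProduct]
  exact norm_commutator_unitary_conj hUnitary (scalar_commute _ (Commute.all _)) hUDU

/-- For `D = diag(0, λ)` with `λ ≠ 0` real and the flip matrix `U`,
conjugation by `U` preserves the operator norm of the commutator with `D`. -/
theorem stmt_2 (l : ℝ) (hl : l ≠ 0)
    (D : Matrix (Fin 2) (Fin 2) ℂ) (hD : D = Matrix.diagonal ![(0 : ℂ), (l : ℂ)])
    (U : Matrix (Fin 2) (Fin 2) ℂ) (hU : U = !![0, 1; 1, 0]) :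
    ∀ a : Matrix (Fin 2) (Fin 2) ℂ,
      ‖D * (U * a * Uᴴ) - (U * a * Uᴴ) * D‖ = ‖D * a - a * D‖ :=
  stmt_2_general l D hD U hU
end

section
/- Let τ be the normalized trace on M₂(ℂ), H the GNS space (M₂(ℂ) with inner product ⟨a,b⟩ = τ(a*b)), P₀ the projection onto ℂ·1, Q₁ = 1-P₀, and D = λ₁ Q₁ with λ₁ > 0 acting on H. Then for σ₃ = diag(1,-1) acting by left multiplication, ‖[D, σ₃]‖ = λ₁. -/
open Matrix

attribute [local instance] Matrix.frobeniusNormedAddCommGroup Matrix.frobeniusNormedSpace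

noncomputable section

/-- Normalized trace on `M₂(ℂ)`. -/
def tau (a : Matrix (Fin 2) (Fin 2) ℂ) : ℂ := Matrix.trace a / 2

/-- Orthogonal projection of the GNS space of the normalized trace on `M₂(ℂ)` onto `ℂ·1`. -/
def P0 : Matrix (Fin 2) (Fin 2) ℂ →ₗ[ℂ] Matrix (Fin 2) (Fin 2) ℂ where
  toFun a := tau a • 1
  map_add' a b := by simp [tau, Matrix.trace_add, add_div, add_smul]
  map_smul' c a := by simp [tau, Matrix.trace_smul, smul_smul, mul_div_assoc]

/-- A matrix viewed as the operator of left multiplication on the GNS space. -/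
def Lmul (x : Matrix (Fin 2) (Fin 2) ℂ) :
    Matrix (Fin 2) (Fin 2) ℂ →L[ℂ] Matrix (Fin 2) (Fin 2) ℂ :=
  LinearMap.toContinuousLinearMap (LinearMap.mulLeft ℂ x)

/-- The Dirac operator `D = λ₁ Q₁` (`Q₁ = 1 - P₀`) on the GNS space of the normalized trace
on `M₂(ℂ)`. -/
def Dirac (l : ℝ) : Matrix (Fin 2) (Fin 2) ℂ →L[ℂ] Matrix (Fin 2) (Fin 2) ℂ :=
  LinearMap.toContinuousLinearMap ((l : ℂ) • (LinearMap.id - P0))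

/-! The commutator `[λ₁ (1 - P₀), x] = -λ₁ [P₀, x]` sends `a` to `λ₁ (τ(a) x - τ(x a) 1)`; for
`x = σ₃` this is `a ↦ λ₁ diag(a₂₂, -a₁₁)`, which keeps two entries of `a` up to sign and drops the
others, so its norm is at most `λ₁`, with equality at `a = 1`. The GNS norm is `1/√2` times the
Frobenius norm used here, and operator norms do not see that rescaling. -/

lemma frobenius_norm_sq_fin_two {α : Type*} [NormedAddCommGroup α]
    (M : Matrix (Fin 2) (Fin 2) α) :
    ‖M‖ ^ 2 = ‖M 0 0‖ ^ 2 + ‖M 0 1‖ ^ 2 + ‖M 1 0‖ ^ 2 + ‖M 1 1‖ ^ 2 := by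
  rw [Matrix.frobenius_norm_def, ← Real.rpow_natCast, ← Real.rpow_mul (by positivity)]
  norm_num [Fin.sum_univ_two]
  ring

lemma P0_apply (a : Matrix (Fin 2) (Fin 2) ℂ) : P0 a = tau a • 1 := rfl

lemma Dirac_mul_Lmul_sub_Lmul_mul_Dirac_apply (l : ℝ) (x a : Matrix (Fin 2) (Fin 2) ℂ) :
    (Dirac l * Lmul x - Lmul x * Dirac l) a = (l : ℂ) • (tau a • x - tau (x * a) • 1) := by
  simp only [Dirac, Lmul, map_smul, map_sub, _root_.sub_apply, mul_apply_eq_comp,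
    LinearMap.coe_toContinuousLinearMap', LinearMap.mulLeft_apply, _root_.smul_apply,
    LinearMap.id_coe, id_eq, P0_apply, Complex.coe_smul, ContinuousLinearMap.map_smul_of_tower,
    mul_one]
  module

lemma tau_smul_sigma3_sub (a : Matrix (Fin 2) (Fin 2) ℂ) :
    tau a • !![1, 0; 0, -1] - tau (!![1, 0; 0, -1] * a) • 1 = !![a 1 1, 0; 0, -a 0 0] := by
  ext i j
  fin_cases i <;> fin_cases j <;>
    simp [tau, Matrix.trace_fin_two, Matrix.vecMul, dotProduct, Fin.sum_univ_two] <;> ring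

lemma norm_of_diag_entries_swap_le (a : Matrix (Fin 2) (Fin 2) ℂ) :
    ‖!![a 1 1, 0; 0, -a 0 0]‖ ≤ ‖a‖ := by
  rw [← pow_le_pow_iff_left₀ (norm_nonneg _) (norm_nonneg _) two_ne_zero,
    frobenius_norm_sq_fin_two, frobenius_norm_sq_fin_two a]
  simp only [Matrix.of_apply, Matrix.cons_val', Matrix.cons_val_zero, Matrix.cons_val_one,
    Matrix.empty_val', Matrix.cons_val_fin_one, norm_zero, norm_neg]
  nlinarith [sq_nonneg ‖a 0 1‖, sq_nonneg ‖a 1 0‖]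

lemma norm_sigma3 :
    ‖(!![1, 0; 0, -1] : Matrix (Fin 2) (Fin 2) ℂ)‖ = ‖(1 : Matrix (Fin 2) (Fin 2) ℂ)‖ := by
  rw [← sq_eq_sq₀ (norm_nonneg _) (norm_nonneg _), frobenius_norm_sq_fin_two,
    frobenius_norm_sq_fin_two]
  simp

/-- For `D = λ₁ Q₁` with `λ₁ > 0` and `σ₃ = diag(1,-1)` acting by left multiplication,
`‖[D, σ₃]‖ = λ₁`. -/
theorem stmt_16 (l : ℝ) (hl : 0 < l)
    (σ₃ : Matrix (Fin 2) (Fin 2) ℂ) (h3 : σ₃ = !![1, 0; 0, -1]) :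
    ContinuousLinearMap.opNorm (Dirac l * Lmul σ₃ - Lmul σ₃ * Dirac l) = l := by
  subst h3
  set C := Dirac l * Lmul !![1, 0; 0, -1] - Lmul !![1, 0; 0, -1] * Dirac l
  have hC (a) : ‖C a‖ = l * ‖!![a 1 1, 0; 0, -a 0 0]‖ := by
    rw [Dirac_mul_Lmul_sub_Lmul_mul_Dirac_apply, tau_smul_sigma3_sub, norm_smul,
      Complex.norm_real, Real.norm_of_nonneg hl.le]
  refine le_antisymm (C.opNorm_le_bound hl.le fun a => ?_) ?_
  · exact (hC a).trans_le (by gcongr; exact norm_of_diag_entries_swap_le a)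
  · calc l = ‖C 1‖ / ‖(1 : Matrix (Fin 2) (Fin 2) ℂ)‖ := by
          rw [hC, Matrix.one_apply_eq, Matrix.one_apply_eq, norm_sigma3,
            mul_div_cancel_right₀ _ (norm_ne_zero_iff.mpr one_ne_zero)]
      _ ≤ C.opNorm := C.ratio_le_opNorm 1

end
end
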